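/- The Stieltjes transform $g_\sigma$ of the semicircle law of variance $\sigma^2$, restricted to $\mathbb{R} \setminus [-2\sigma, 2\sigma]$, is given explicitly by $g_\sigma(x) = \frac{x}{2\sigma^2}\left(1 - \sqrt{1 - \frac{4\sigma^2}{x^2}}\right)$ for all real $x$ with $|x| > 2\sigma$. -/

import Mathlib

/-- Density of the semicircle distribution of variance `σ^2`. -/
noncomputable def scDensity (σ t : ℝ) : ℝ :=
  if t ∈ Set.Icc (-(2*σ)) (2*σ) then (2 * Real.pi * σ^2)⁻¹ * Real.sqrt (4*σ^2 - t^2) else 0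

/-- Stieltjes transform of the semicircle distribution of variance `σ^2`. -/
noncomputable def gSC (σ : ℝ) (z : ℂ) : ℂ := ∫ t : ℝ, (z - (t : ℂ))⁻¹ * (scDensity σ t : ℂ)

/-! For `a < x` the function `√(a² - t²) / (x - t)` has on `(-a, a)` the elementary antiderivative
`x arcsin (t / a) - √(a² - t²) + √(x² - a²) arcsin ((a² - x t) / (a (x - t)))`
(substitute `t = a sin θ`, then `tan (θ / 2)`), whose values at `±a` give
`∫_{-a}^{a} √(a² - t²) / (x - t) dt = π (x - √(x² - a²))`. The case `x < -a` follows by the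
reflection `t ↦ -t`; take `a = 2σ`. -/

open Real MeasureTheory Set

section Antiderivative

variable {a x t : ℝ}

lemma hasDerivAt_arcsin_div (ha : 0 < a) (ht : t ∈ Ioo (-a) a) :
    HasDerivAt (fun t => arcsin (t / a)) (√(a^2 - t^2))⁻¹ t := by
  obtain ⟨ht₁, ht₂⟩ := ht
  have hsqrt : √(1 - (t / a)^2) = √(a^2 - t^2) / a := by
    rw [show 1 - (t / a)^2 = (a^2 - t^2) / a^2 by field_simp,
      sqrt_div' _ (sq_nonneg a), sqrt_sq ha.le]
  have hne₁ : t / a ≠ -1 := by rw [ne_eq, div_eq_iff ha.ne']; linarith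
  have hne₂ : t / a ≠ 1 := by rw [ne_eq, div_eq_iff ha.ne']; linarith
  refine ((hasDerivAt_arcsin hne₁ hne₂).comp t ((hasDerivAt_id t).div_const a)).congr_deriv ?_
  rw [hsqrt]
  field_simp

lemma hasDerivAt_sqrt_sq_sub_sq (ht : t ∈ Ioo (-a) a) :
    HasDerivAt (fun t => √(a^2 - t^2)) (-t / √(a^2 - t^2)) t := by
  have hpos : 0 < a^2 - t^2 := by nlinarith [ht.1, ht.2]
  refine (((hasDerivAt_pow 2 t).const_sub (a^2)).sqrt hpos.ne').congr_deriv ?_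
  field_simp
  ring

/- The Möbius map `u t = (a² - x t) / (a (x - t))` sends `(-a, a)` into `(-1, 1)` because
`1 - u² = (a² - t²) (x² - a²) / (a (x - t))²`. -/
lemma hasDerivAt_arcsin_moebius (ha : 0 < a) (hax : a < x) (ht : t ∈ Ioo (-a) a) :
    HasDerivAt (fun t => arcsin ((a^2 - x * t) / (a * (x - t))))
      (-√(x^2 - a^2) / ((x - t) * √(a^2 - t^2))) t := by
  obtain ⟨ht₁, ht₂⟩ := ht
  have hxt : 0 < x - t := by linarith
  have hd : 0 < a^2 - t^2 := by nlinarith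
  have hs : 0 < x^2 - a^2 := by nlinarith
  set u := (a^2 - x * t) / (a * (x - t))
  have h1u : 1 - u^2 = (a^2 - t^2) * (x^2 - a^2) / (a * (x - t))^2 := by
    simp only [u]; field_simp; ring
  have hu : u^2 < 1 := by
    have : 0 < (a^2 - t^2) * (x^2 - a^2) / (a * (x - t))^2 := by positivity
    linarith
  have hu₁ : u ≠ -1 := by rintro h; simp [h] at hu
  have hu₂ : u ≠ 1 := by rintro h; simp [h] at hu
  have hsqrt : √(1 - u^2) = √(a^2 - t^2) * √(x^2 - a^2) / (a * (x - t)) := by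
    rw [h1u, sqrt_div' _ (sq_nonneg _), sqrt_mul hd.le, sqrt_sq (by positivity)]
  have hnum : HasDerivAt (fun t => a^2 - x * t) (-x) t := by
    simpa using ((hasDerivAt_id t).const_mul x).const_sub (a^2)
  have hden : HasDerivAt (fun t => a * (x - t)) (-a) t := by
    simpa using ((hasDerivAt_id t).const_sub x).const_mul a
  have hu' := hnum.div hden (by positivity)
  refine ((hasDerivAt_arcsin hu₁ hu₂).comp t hu').congr_deriv ?_
  rw [hsqrt]
  have hd' : 0 < √(a^2 - t^2) := sqrt_pos.mpr hd
  have hs' : 0 < √(x^2 - a^2) := sqrt_pos.mpr hs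
  field_simp
  rw [sq_sqrt hs.le]
  ring

lemma hasDerivAt_antideriv_sqrt_sq_sub_sq_div_sub (ha : 0 < a) (hax : a < x) (ht : t ∈ Ioo (-a) a) :
    HasDerivAt (fun t => x * arcsin (t / a) - √(a^2 - t^2)
        + √(x^2 - a^2) * arcsin ((a^2 - x * t) / (a * (x - t))))
      (√(a^2 - t^2) / (x - t)) t := by
  refine (((hasDerivAt_arcsin_div ha ht).const_mul x).sub (hasDerivAt_sqrt_sq_sub_sq ht)
    |>.add ((hasDerivAt_arcsin_moebius ha hax ht).const_mul _)).congr_deriv ?_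
  have hxt : x - t ≠ 0 := by linarith [ht.2]
  have hd : 0 < √(a^2 - t^2) := sqrt_pos.mpr (by nlinarith [ht.1, ht.2])
  field_simp
  rw [sq_sqrt (by nlinarith), sq_sqrt (by nlinarith [ht.1, ht.2])]
  ring

end Antiderivative

lemma integral_sqrt_sq_sub_sq_div_sub_of_lt {a x : ℝ} (ha : 0 < a) (hax : a < x) :
    ∫ t in -a..a, √(a^2 - t^2) / (x - t) = π * (x - √(x^2 - a^2)) := by
  have hxt : ∀ t ∈ Icc (-a) a, x - t ≠ 0 := fun t ht => by linarith [ht.2]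
  have hmoebius : ∀ t ∈ Icc (-a) a, a * (x - t) ≠ 0 := fun t ht => mul_ne_zero ha.ne' (hxt t ht)
  rw [intervalIntegral.integral_eq_sub_of_hasDerivAt_of_le (by linarith) ?cont
    (fun t ht => hasDerivAt_antideriv_sqrt_sq_sub_sq_div_sub ha hax ht) ?int]
  case cont => fun_prop (disch := assumption)
  case int =>
    refine ContinuousOn.intervalIntegrable ?_
    rw [uIcc_of_le (by linarith)]
    fun_prop (disch := assumption)
  have hright : (a^2 - x * a) / (a * (x - a)) = -1 := by
    rw [div_eq_iff (hmoebius a (by constructor <;> linarith))]; ring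
  have hleft : (a^2 - x * -a) / (a * (x - -a)) = 1 := by
    rw [div_eq_iff (hmoebius (-a) (by constructor <;> linarith))]; ring
  simp only [hright, hleft, div_self ha.ne', neg_div, arcsin_one, arcsin_neg, neg_sq, sub_self,
    sqrt_zero]
  ring

lemma integral_sqrt_sq_sub_sq_div_sub {a x : ℝ} (ha : 0 < a) (hx : a < |x|) :
    ∫ t in -a..a, √(a^2 - t^2) / (x - t) = π * x * (1 - √(1 - a^2 / x^2)) := by
  have hx0 : x ≠ 0 := abs_pos.mp (ha.trans hx)
  have hsqrt : √(1 - a^2 / x^2) = √(x^2 - a^2) / |x| := by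
    rw [show 1 - a^2 / x^2 = (x^2 - a^2) / |x|^2 by rw [sq_abs]; field_simp,
      sqrt_div' _ (sq_nonneg _), sqrt_sq (abs_nonneg x)]
  rw [hsqrt]
  rcases lt_abs.mp hx with hpos | hneg
  · rw [integral_sqrt_sq_sub_sq_div_sub_of_lt ha hpos, abs_of_pos (by linarith)]
    field_simp
  · have hreflect : ∫ t in -a..a, √(a^2 - t^2) / (x - t)
        = -∫ t in -a..a, √(a^2 - t^2) / (-x - t) := by
      rw [← intervalIntegral.integral_neg, ← neg_neg a, ← intervalIntegral.integral_comp_neg,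
        neg_neg]
      congr 1 with t
      rw [neg_sq, ← div_neg, neg_sub', sub_neg_eq_add, sub_neg_eq_add, neg_neg]
    rw [hreflect, integral_sqrt_sq_sub_sq_div_sub_of_lt ha hneg, abs_of_neg (by linarith), neg_sq]
    field_simp
    ring

lemma integral_inv_sub_mul_scDensity {σ : ℝ} (hσ : 0 ≤ σ) (x : ℝ) :
    ∫ t, (x - t)⁻¹ * scDensity σ t
      = (2 * π * σ^2)⁻¹ * ∫ t in -(2 * σ)..2 * σ, √((2 * σ)^2 - t^2) / (x - t) := by
  have hindicator : (fun t => (x - t)⁻¹ * scDensity σ t) = (Icc (-(2 * σ)) (2 * σ)).indicator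
      fun t => (2 * π * σ^2)⁻¹ * (√((2 * σ)^2 - t^2) / (x - t)) := by
    ext t
    by_cases ht : t ∈ Icc (-(2 * σ)) (2 * σ) <;> simp only [scDensity, ht, if_true, if_false,
      indicator_of_mem, indicator_of_notMem, not_false_eq_true, mul_zero]
    rw [show (2 * σ)^2 = 4 * σ^2 by ring]
    ring
  rw [hindicator, integral_indicator measurableSet_Icc, integral_Icc_eq_integral_Ioc,
    ← intervalIntegral.integral_of_le (by linarith), intervalIntegral.integral_const_mul]

lemma gSC_ofReal (σ x : ℝ) : gSC σ x = ((∫ t, (x - t)⁻¹ * scDensity σ t : ℝ) : ℂ) := by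
  rw [gSC]
  exact_mod_cast integral_ofReal (𝕜 := ℂ)

theorem gSC_explicit_on_real (σ : ℝ) (hσ : 0 < σ) (x : ℝ) (hx : 2 * σ < |x|) :
    gSC σ (x : ℂ) = ((x / (2 * σ^2) * (1 - Real.sqrt (1 - 4 * σ^2 / x^2)) : ℝ) : ℂ) := by
  rw [gSC_ofReal, integral_inv_sub_mul_scDensity hσ.le,
    integral_sqrt_sq_sub_sq_div_sub (by positivity) hx, show (2 * σ)^2 = 4 * σ^2 by ring]
  congr 1
  field_simp
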